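/- arXiv:2403.14555 — 5 statements merged into one kernel-verified Lean document; each statement's English description precedes it below -/
import Mathlib

section
/- If a > 0, b ∈ (0,1), and φ(γ) = a·γ^b agrees with log₂(1+γ) at two points 0 < γ₁ < γ₂, then φ(γ) ≤ log₂(1+γ) for all γ ∈ [γ₁, γ₂]. -/
/-!
Put `c = a log 2` and `g x = log (1 + x) / x ^ b`; the hypotheses say `g γ₁ = g γ₂ = c` and the
claim is `c ≤ g` on `[γ₁, γ₂]`. Now `x ^ (b + 1) g' x = x / (1 + x) - b log (1 + x) =: h x`, and
`h 0 = 0` while `(1 + x) ^ 2 h' x = 1 - b (1 + x)` is decreasing. A differentiable function whose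
derivative, once nonpositive, stays negative is strictly quasiconcave. Applied to `h` on `[0, ∞)`
this shows that `h`, hence `g'`, has the same property on `(0, ∞)`; so `g` is strictly
quasiconcave there and lies above `min (g γ₁) (g γ₂) = c` between `γ₁` and `γ₂`.
-/

open Real Set

theorem min_lt_of_hasDerivAt_of_sign_change {s : Set ℝ} [hs : s.OrdConnected] {g g' : ℝ → ℝ}
    (hg : ∀ x ∈ s, HasDerivAt g (g' x) x)
    (hsign : ∀ x ∈ s, ∀ y ∈ s, x < y → g' x ≤ 0 → g' y < 0)
    {x y z : ℝ} (hx : x ∈ s) (hz : z ∈ s) (hxy : x < y) (hyz : y < z) :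
    min (g x) (g z) < g y := by
  have hy : y ∈ s := hs.out hx hz ⟨hxy.le, hyz.le⟩
  have hcont : ∀ {u v}, u ∈ s → v ∈ s → ContinuousOn g (Icc u v) := fun hu hv t ht =>
    (hg t (hs.out hu hv ht)).continuousAt.continuousWithinAt
  by_cases hy' : g' y ≤ 0
  · have hanti : StrictAntiOn g (Icc y z) :=
      strictAntiOn_of_deriv_neg (convex_Icc y z) (hcont hy hz) fun t ht => by
        rw [interior_Icc] at ht
        have hts : t ∈ s := hs.out hy hz (Ioo_subset_Icc_self ht)
        rw [(hg t hts).deriv]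
        exact hsign y hy t hts ht.1 hy'
    exact min_lt_of_right_lt (hanti ⟨le_rfl, hyz.le⟩ ⟨hyz.le, le_rfl⟩ hyz)
  · have hmono : StrictMonoOn g (Icc x y) :=
      strictMonoOn_of_deriv_pos (convex_Icc x y) (hcont hx hy) fun t ht => by
        rw [interior_Icc] at ht
        have hts : t ∈ s := hs.out hx hy (Ioo_subset_Icc_self ht)
        rw [(hg t hts).deriv]
        by_contra! ht'
        exact hy' (hsign t hts y hy ht.2 ht').le
    exact min_lt_of_left_lt (hmono ⟨le_rfl, hxy.le⟩ ⟨hxy.le, le_rfl⟩ hxy)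

/-- `log (1 + x)` times the excess of the elasticity `x / ((1 + x) log (1 + x))` of `log (1 + x)`
over `b`. -/
noncomputable def elasticityGap (b x : ℝ) : ℝ := x / (1 + x) - b * log (1 + x)

theorem hasDerivAt_elasticityGap (b : ℝ) {x : ℝ} (hx : -1 < x) :
    HasDerivAt (elasticityGap b) ((1 - b * (1 + x)) / (1 + x) ^ 2) x := by
  have hx' : 1 + x ≠ 0 := by linarith
  have hlog : HasDerivAt (fun x => log (1 + x)) (1 / (1 + x)) x := by
    simpa using ((hasDerivAt_id' x).const_add 1).log hx'
  refine (((hasDerivAt_id' x).div ((hasDerivAt_id' x).const_add 1) hx').sub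
    (hlog.const_mul b)).congr_deriv ?_
  field_simp
  ring

theorem elasticityGap_neg_of_nonpos {b x y : ℝ} (hx : 0 < x) (hxy : x < y)
    (h : elasticityGap b x ≤ 0) : elasticityGap b y < 0 := by
  have hsign : ∀ u ∈ Ici (0 : ℝ), ∀ v ∈ Ici (0 : ℝ), u < v →
      (1 - b * (1 + u)) / (1 + u) ^ 2 ≤ 0 → (1 - b * (1 + v)) / (1 + v) ^ 2 < 0 := by
    intro u (hu : 0 ≤ u) v (hv : 0 ≤ v) huv hneg
    have hnum : 1 - b * (1 + u) ≤ 0 := by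
      simpa using (div_le_iff₀ (by positivity)).mp hneg
    exact div_neg_of_neg_of_pos (by nlinarith) (by positivity)
  have hmin := min_lt_of_hasDerivAt_of_sign_change (s := Ici 0)
    (fun u (hu : 0 ≤ u) => hasDerivAt_elasticityGap b (by linarith)) hsign
    self_mem_Ici (mem_Ici.mpr (hx.trans hxy).le) hx hxy
  have hzero : elasticityGap b 0 = 0 := by simp [elasticityGap]
  rw [hzero, min_lt_iff] at hmin
  exact hmin.resolve_left h.not_gt |>.trans_le h

theorem hasDerivAt_log_one_add_mul_rpow_neg (b : ℝ) {x : ℝ} (hx : 0 < x) :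
    HasDerivAt (fun x => log (1 + x) * x ^ (-b)) (x ^ (-b - 1) * elasticityGap b x) x := by
  have hlog : HasDerivAt (fun x => log (1 + x)) (1 / (1 + x)) x := by
    simpa using ((hasDerivAt_id' x).const_add 1).log (by linarith)
  refine (hlog.mul (hasDerivAt_rpow_const (p := -b) (Or.inl hx.ne'))).congr_deriv ?_
  have hsplit : x ^ (-b) = x ^ (-b - 1) * x := by
    rw [← rpow_add_one hx.ne']
    ring_nf
  rw [hsplit, elasticityGap]
  field_simp
  ring

theorem mul_rpow_le_logb_iff {a b x : ℝ} (hx : 0 < x) :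
    a * x ^ b ≤ logb 2 (1 + x) ↔ a * log 2 ≤ log (1 + x) * x ^ (-b) := by
  rw [logb, le_div_iff₀ (log_pos one_lt_two), rpow_neg hx.le, ← div_eq_mul_inv,
    le_div_iff₀ (rpow_pos_of_pos hx b), mul_right_comm]

theorem mul_rpow_eq_logb_iff {a b x : ℝ} (hx : 0 < x) :
    a * x ^ b = logb 2 (1 + x) ↔ a * log 2 = log (1 + x) * x ^ (-b) := by
  rw [logb, eq_div_iff (log_pos one_lt_two).ne', rpow_neg hx.le, ← div_eq_mul_inv,
    eq_div_iff (rpow_pos_of_pos hx b).ne', mul_right_comm]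

theorem stmt_2_general (a b γ₁ γ₂ : ℝ)
    (h1 : 0 < γ₁)
    (e1 : a * γ₁ ^ b = Real.logb 2 (1 + γ₁))
    (e2 : a * γ₂ ^ b = Real.logb 2 (1 + γ₂)) :
    ∀ γ ∈ Icc γ₁ γ₂, a * γ ^ b ≤ Real.logb 2 (1 + γ) := by
  rintro γ ⟨hγ₁, hγ₂⟩
  rcases hγ₁.eq_or_lt with rfl | hγ₁
  · exact e1.le
  rcases hγ₂.eq_or_lt with rfl | hγ₂
  · exact e2.le
  have hγ₂pos : 0 < γ₂ := h1.trans (hγ₁.trans hγ₂)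
  rw [mul_rpow_eq_logb_iff h1] at e1
  rw [mul_rpow_eq_logb_iff hγ₂pos] at e2
  rw [mul_rpow_le_logb_iff (h1.trans hγ₁)]
  have hsign : ∀ x ∈ Ioi (0 : ℝ), ∀ y ∈ Ioi (0 : ℝ), x < y →
      x ^ (-b - 1) * elasticityGap b x ≤ 0 → y ^ (-b - 1) * elasticityGap b y < 0 :=
    fun x hx y hy hxy hneg => mul_neg_of_pos_of_neg (rpow_pos_of_pos hy _)
      (elasticityGap_neg_of_nonpos hx hxy (nonpos_of_mul_nonpos_right hneg (rpow_pos_of_pos hx _)))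
  have hmin := min_lt_of_hasDerivAt_of_sign_change (s := Ioi 0)
    (fun x hx => hasDerivAt_log_one_add_mul_rpow_neg b hx) hsign h1 hγ₂pos hγ₁ hγ₂
  rw [← e1, ← e2, min_self] at hmin
  exact hmin.le

theorem stmt_2 (a b γ₁ γ₂ : ℝ) (ha : 0 < a) (hb0 : 0 < b) (hb1 : b < 1)
    (h1 : 0 < γ₁) (h12 : γ₁ < γ₂)
    (e1 : a * γ₁ ^ b = Real.logb 2 (1 + γ₁))
    (e2 : a * γ₂ ^ b = Real.logb 2 (1 + γ₂)) :
    ∀ γ ∈ Icc γ₁ γ₂, a * γ ^ b ≤ Real.logb 2 (1 + γ) :=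
  stmt_2_general a b γ₁ γ₂ h1 e1 e2
end

section
/- If a > 0, b ∈ (0,1), and φ(γ) = a·γ^b agrees with log₂(1+γ) at two points 0 < γ₁ < γ₂, then φ(γ) ≥ log₂(1+γ) for all γ ∈ (0, γ₁] and φ(γ) ≥ log₂(1+γ) for all γ ≥ γ₂. -/
/-!
In the variable `u = log γ` the logarithm of `a γ ^ b` is the affine function `log a + b u`, while
`log (log₂ (1 + γ)) = log (log (1 + exp u)) - log (log 2)` is concave in `u`: its derivative is the
reciprocal of `(1 + x) log (1 + x) / x` at `x = exp u`, a slope of the convex function `x log x`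
from `1`, hence increasing in `x`. A concave function that agrees with an affine one at two
points lies below it outside the segment between them.
-/

open Real Set

lemma monotoneOn_one_add_mul_log_one_add_div :
    MonotoneOn (fun x : ℝ => (1 + x) * log (1 + x) / x) (Ioi 0) := by
  intro x hx y hy hxy
  have hx : (0 : ℝ) < x := hx
  have hy : (0 : ℝ) < y := hy
  have := convexOn_mul_log.secant_mono (a := 1) (x := 1 + x) (y := 1 + y) (by simp)
    (by simp only [mem_Ici]; linarith) (by simp only [mem_Ici]; linarith)
    (by linarith) (by linarith) (by linarith)
  simpa using this

lemma hasDerivAt_log_log_one_add_exp (u : ℝ) :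
    HasDerivAt (fun u => log (log (1 + exp u)))
      (exp u / ((1 + exp u) * log (1 + exp u))) u := by
  have hlog : 0 < log (1 + exp u) := log_pos (by linarith [exp_pos u])
  rw [← div_div]
  exact (((hasDerivAt_exp u).const_add 1).log (by positivity)).log hlog.ne'

lemma concaveOn_log_log_one_add_exp : ConcaveOn ℝ univ (fun u => log (log (1 + exp u))) := by
  refine Antitone.concaveOn_univ_of_deriv
    (fun u => (hasDerivAt_log_log_one_add_exp u).differentiableAt) fun u v huv => ?_
  have hrecip : ∀ w, exp w / ((1 + exp w) * log (1 + exp w))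
      = ((1 + exp w) * log (1 + exp w) / exp w)⁻¹ := fun w => (inv_div _ _).symm
  have hpos : 0 < (1 + exp u) * log (1 + exp u) / exp u := by
    have := exp_pos u
    have : 0 < log (1 + exp u) := log_pos (by linarith)
    positivity
  simp only [(hasDerivAt_log_log_one_add_exp _).deriv, hrecip]
  exact inv_anti₀ hpos (monotoneOn_one_add_mul_log_one_add_div (exp_pos u) (exp_pos v)
    (exp_le_exp.2 huv))

lemma log_log_one_add_exp_log_sub_mul_log {a b γ : ℝ} (ha : 0 < a) (hγ : 0 < γ) :
    log (log (1 + exp (log γ))) - b * log γ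
      = log a + log (log 2) + (log (logb 2 (1 + γ)) - log (a * γ ^ b)) := by
  have hlog : 0 < log (1 + γ) := log_pos (by linarith)
  rw [exp_log hγ, logb, log_div hlog.ne' (log_pos one_lt_two).ne', log_mul ha.ne' (by positivity),
    log_rpow hγ]
  ring

theorem stmt_3_general (a b γ₁ γ₂ : ℝ) (ha : 0 < a) (h1 : 0 < γ₁) (h12 : γ₁ < γ₂)
    (e1 : a * γ₁ ^ b = Real.logb 2 (1 + γ₁))
    (e2 : a * γ₂ ^ b = Real.logb 2 (1 + γ₂)) :
    (∀ γ ∈ Ioc 0 γ₁, a * γ ^ b ≥ Real.logb 2 (1 + γ)) ∧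
    (∀ γ, γ₂ ≤ γ → a * γ ^ b ≥ Real.logb 2 (1 + γ)) := by
  set G : ℝ → ℝ := fun u => log (log (1 + exp u)) - b * u
  set K := log a + log (log 2)
  have hG : ConcaveOn ℝ univ G :=
    concaveOn_log_log_one_add_exp.sub ((LinearMap.mulLeft ℝ b).convexOn convex_univ)
  have hG_log {γ} (hγ : 0 < γ) : G (log γ) = K + (log (logb 2 (1 + γ)) - log (a * γ ^ b)) :=
    log_log_one_add_exp_log_sub_mul_log ha hγ
  have hG_eq {γ} (hγ : 0 < γ) (e : a * γ ^ b = logb 2 (1 + γ)) : G (log γ) = K := by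
    rw [hG_log hγ, e, sub_self, add_zero]
  have hG_le {γ} (hγ : 0 < γ) (hle : G (log γ) ≤ K) : a * γ ^ b ≥ logb 2 (1 + γ) := by
    rw [hG_log hγ, add_le_iff_nonpos_right, sub_nonpos,
      log_le_log_iff (logb_pos one_lt_two (by linarith)) (by positivity)] at hle
    exact hle
  have h2 := h1.trans h12
  have hlog12 := log_lt_log h1 h12
  refine ⟨fun γ ⟨hγ, hγ₁⟩ => hG_le hγ ?_, fun γ hγ₂ => hG_le (h2.trans_le hγ₂) ?_⟩
  · rw [← hG_eq h1 e1]
    exact hG.left_le_of_le_right'' (mem_univ _) (mem_univ _) (log_le_log hγ hγ₁) hlog12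
      (by rw [hG_eq h1 e1, hG_eq h2 e2])
  · rw [← hG_eq h2 e2]
    exact hG.right_le_of_le_left'' (mem_univ _) (mem_univ _) hlog12 (log_le_log h2 hγ₂)
      (by rw [hG_eq h1 e1, hG_eq h2 e2])

theorem stmt_3 (a b γ₁ γ₂ : ℝ) (ha : 0 < a) (hb0 : 0 < b) (hb1 : b < 1)
    (h1 : 0 < γ₁) (h12 : γ₁ < γ₂)
    (e1 : a * γ₁ ^ b = Real.logb 2 (1 + γ₁))
    (e2 : a * γ₂ ^ b = Real.logb 2 (1 + γ₂)) :
    (∀ γ ∈ Ioc 0 γ₁, a * γ ^ b ≥ Real.logb 2 (1 + γ)) ∧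
    (∀ γ, γ₂ ≤ γ → a * γ ^ b ≥ Real.logb 2 (1 + γ)) :=
  stmt_3_general a b γ₁ γ₂ ha h1 h12 e1 e2
end

section
/- A power function φ(γ) = a·γ^b with a > 0, b ∈ (0,1) and two strictly monotone concave functions of this form cannot coincide with log₂(1+γ) at three distinct positive points: the only contact points of φ with log₂(1+γ) on [0,∞) are 0 (limit), γ₁, and γ₂. -/
open Real Set

/-!
Taking logarithms, `a γ^b = log₂ (1 + γ)` says that `log (log (1 + γ)) - b log γ = log (a log 2)`.
By Rolle, three solutions would give two distinct critical points of the left-hand side, i.e. two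
points `ξ > 0` with `b (1 + ξ) log (1 + ξ) / ξ = 1`. But `(1 + ξ) log (1 + ξ) / ξ` is the slope
of the secant of the strictly convex function `y log y` between `1` and `1 + ξ`, hence strictly
increasing in `ξ`.
-/

noncomputable def logRatio (b x : ℝ) : ℝ := log (log (1 + x)) - b * log x

lemma strictMonoOn_one_add_mul_log_one_add_div :
    StrictMonoOn (fun x : ℝ => (1 + x) * log (1 + x) / x) (Ioi 0) := by
  intro x (hx : 0 < x) y (hy : 0 < y) hxy
  have := strictConvexOn_mul_log.secant_strict_mono (a := 1) (x := 1 + x) (y := 1 + y)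
    (by simp) (by simp; linarith) (by simp; linarith) (by simp; linarith) (by simp; linarith)
    (by linarith)
  simpa using this

lemma hasDerivAt_logRatio (b : ℝ) {x : ℝ} (hx : 0 < x) :
    HasDerivAt (logRatio b) (1 / (1 + x) / log (1 + x) - b * x⁻¹) x := by
  have hlog : log (1 + x) ≠ 0 := (log_pos (by linarith)).ne'
  exact ((((hasDerivAt_id x).const_add 1).log (show 1 + x ≠ 0 by linarith)).log hlog).sub
    ((hasDerivAt_log hx.ne').const_mul b)

lemma exists_mem_Ioo_mul_one_add_mul_log_div_eq_one {b x₁ x₂ : ℝ} (hx₁ : 0 < x₁) (hx₁₂ : x₁ < x₂)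
    (h : logRatio b x₁ = logRatio b x₂) :
    ∃ ξ ∈ Ioo x₁ x₂, b * ((1 + ξ) * log (1 + ξ) / ξ) = 1 := by
  have hderiv : ∀ x ∈ Icc x₁ x₂,
      HasDerivAt (logRatio b) (1 / (1 + x) / log (1 + x) - b * x⁻¹) x :=
    fun x hx => hasDerivAt_logRatio b (hx₁.trans_le hx.1)
  obtain ⟨ξ, hξ, hzero⟩ := exists_hasDerivAt_eq_zero hx₁₂
    (fun x hx => (hderiv x hx).continuousAt.continuousWithinAt) h
    (fun x hx => hderiv x (Ioo_subset_Icc_self hx))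
  refine ⟨ξ, hξ, ?_⟩
  have hξ₀ : 0 < ξ := hx₁.trans hξ.1
  have hlog : 0 < log (1 + ξ) := log_pos (by linarith)
  field_simp at hzero ⊢
  linarith

lemma false_of_logRatio_eq_of_lt {b x₁ x₂ x₃ : ℝ} (hx₁ : 0 < x₁) (hx₁₂ : x₁ < x₂) (hx₂₃ : x₂ < x₃)
    (h₁₂ : logRatio b x₁ = logRatio b x₂) (h₂₃ : logRatio b x₂ = logRatio b x₃) : False := by
  obtain ⟨ξ, hξ, hξb⟩ := exists_mem_Ioo_mul_one_add_mul_log_div_eq_one hx₁ hx₁₂ h₁₂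
  obtain ⟨η, hη, hηb⟩ := exists_mem_Ioo_mul_one_add_mul_log_div_eq_one (hx₁.trans hx₁₂) hx₂₃ h₂₃
  have hb : b ≠ 0 := left_ne_zero_of_mul_eq_one hξb
  have hξη : ξ < η := hξ.2.trans hη.1
  exact (strictMonoOn_one_add_mul_log_one_add_div (hx₁.trans hξ.1)
    (hx₁.trans (hξ.1.trans hξη)) hξη).ne (mul_left_cancel₀ hb (hξb.trans hηb.symm))

lemma logRatio_ne_of_logRatio_eq {b x y z : ℝ} (hx : 0 < x) (hxy : x < y) (hz : 0 < z)
    (hzx : z ≠ x) (hzy : z ≠ y) (h : logRatio b x = logRatio b y) :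
    logRatio b z ≠ logRatio b x := by
  intro hzx'
  rcases hzx.lt_or_gt with hzx | hxz
  · exact false_of_logRatio_eq_of_lt hz hzx hxy hzx' h
  rcases hzy.lt_or_gt with hzy | hyz
  · exact false_of_logRatio_eq_of_lt hx hxz hzy hzx'.symm (hzx'.trans h)
  · exact false_of_logRatio_eq_of_lt hx hxy hyz h (h.symm.trans hzx'.symm)

lemma logRatio_eq_of_mul_rpow_eq_logb {a b x : ℝ} (hx : 0 < x)
    (h : a * x ^ b = logb 2 (1 + x)) : logRatio b x = log (a * log 2) := by
  have hlog : log (1 + x) = a * log 2 * x ^ b := by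
    rw [logb, eq_div_iff (log_pos one_lt_two).ne'] at h
    linarith
  have ha : a * log 2 ≠ 0 := by
    have : 0 < a * log 2 * x ^ b := hlog ▸ log_pos (by linarith)
    exact left_ne_zero_of_mul this.ne'
  rw [logRatio, hlog, log_mul ha (rpow_pos_of_pos hx b).ne', log_rpow hx]
  ring

theorem stmt_5_general (a b γ₁ γ₂ : ℝ)
    (h1 : 0 < γ₁) (h12 : γ₁ < γ₂)
    (e1 : a * γ₁ ^ b = Real.logb 2 (1 + γ₁))
    (e2 : a * γ₂ ^ b = Real.logb 2 (1 + γ₂)) :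
    ∀ γ : ℝ, 0 < γ → γ ≠ γ₁ → γ ≠ γ₂ → a * γ ^ b ≠ Real.logb 2 (1 + γ) := by
  intro γ hγ hγ₁ hγ₂ e
  have r₁ := logRatio_eq_of_mul_rpow_eq_logb h1 e1
  have r₂ := logRatio_eq_of_mul_rpow_eq_logb (h1.trans h12) e2
  have r := logRatio_eq_of_mul_rpow_eq_logb hγ e
  exact logRatio_ne_of_logRatio_eq h1 h12 hγ hγ₁ hγ₂ (r₁.trans r₂.symm) (r.trans r₁.symm)

theorem stmt_5 (a b γ₁ γ₂ : ℝ) (ha : 0 < a) (hb0 : 0 < b) (hb1 : b < 1)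
    (h1 : 0 < γ₁) (h12 : γ₁ < γ₂)
    (e1 : a * γ₁ ^ b = Real.logb 2 (1 + γ₁))
    (e2 : a * γ₂ ^ b = Real.logb 2 (1 + γ₂)) :
    ∀ γ : ℝ, 0 < γ → γ ≠ γ₁ → γ ≠ γ₂ → a * γ ^ b ≠ Real.logb 2 (1 + γ) :=
  stmt_5_general a b γ₁ γ₂ h1 h12 e1 e2
end

section
/- The interpolated exponent b from the PPF construction satisfies 0 < b < 1 whenever 0 < γ₁ < γ₂: i.e., b = log(log₂(1+γ₂)/log₂(1+γ₁)) / log(γ₂/γ₁) lies strictly between 0 and 1. -/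
open Real Set

/- Both bounds reduce to monotonicity. Since `logb 2 = log / log 2`, the constant `log (log 2)`
cancels in the numerator, which becomes `log (log (1 + γ₂)) - log (log (1 + γ₁)) > 0`. The bound
`b < 1` says that `log (log (1 + γ)) - log γ` decreases, i.e. that the secant slope
`log (1 + γ) / γ` of the concave function `log` through `1` decreases. -/

namespace Real

theorem log_logb {b x : ℝ} (hb : log b ≠ 0) (hx : log x ≠ 0) :
    log (logb b x) = log (log x) - log (log b) :=
  log_div hx hb

theorem strictAntiOn_log_one_add_div : StrictAntiOn (fun x => log (1 + x) / x) (Ioi 0) := by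
  intro x (hx : 0 < x) y (hy : 0 < y) hxy
  have h := strictConcaveOn_log_Ioi.secant_strict_mono (a := 1) (x := 1 + x) (y := 1 + y)
    (mem_Ioi.2 one_pos) (mem_Ioi.2 (by linarith)) (mem_Ioi.2 (by linarith))
    (by linarith) (by linarith) (by linarith)
  simpa only [log_one, sub_zero, add_sub_cancel_left] using h

theorem strictAntiOn_log_log_one_add_sub_log :
    StrictAntiOn (fun x => log (log (1 + x)) - log x) (Ioi 0) := by
  intro x (hx : 0 < x) y (hy : 0 < y) hxy
  have hlog (z : ℝ) (hz : 0 < z) : 0 < log (1 + z) := log_pos (by linarith)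
  have h := log_lt_log (div_pos (hlog y hy) hy) (strictAntiOn_log_one_add_div hx hy hxy)
  rwa [log_div (hlog y hy).ne' hy.ne', log_div (hlog x hx).ne' hx.ne'] at h

end Real

theorem stmt_10 (γ₁ γ₂ : ℝ) (h1 : 0 < γ₁) (h12 : γ₁ < γ₂) :
    0 < (Real.log (Real.logb 2 (1 + γ₂)) - Real.log (Real.logb 2 (1 + γ₁))) /
          (Real.log γ₂ - Real.log γ₁) ∧
    (Real.log (Real.logb 2 (1 + γ₂)) - Real.log (Real.logb 2 (1 + γ₁))) /
          (Real.log γ₂ - Real.log γ₁) < 1 := by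
  have h2 : 0 < γ₂ := h1.trans h12
  have hlog₁ : 0 < log (1 + γ₁) := log_pos (by linarith)
  have hlog₂ : 0 < log (1 + γ₂) := log_pos (by linarith)
  have hlog2 : log 2 ≠ 0 := (log_pos one_lt_two).ne'
  rw [log_logb hlog2 hlog₁.ne', log_logb hlog2 hlog₂.ne', sub_sub_sub_cancel_right]
  have hden : 0 < log γ₂ - log γ₁ := sub_pos.2 (log_lt_log h1 h12)
  have hnum : 0 < log (log (1 + γ₂)) - log (log (1 + γ₁)) :=
    sub_pos.2 (log_lt_log hlog₁ (log_lt_log (by linarith) (by linarith)))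
  have hslope := strictAntiOn_log_log_one_add_sub_log h1 h2 h12
  exact ⟨div_pos hnum hden, (div_lt_one hden).2 (by linarith)⟩
end

section
/- The function G(s) = log(log(1 + e^s)) is strictly concave on ℝ. -/
/-!
Since `G = log ∘ softplus`, `G' = exp s / ((1 + exp s) * softplus s)`, and the numerator of the
derivative of this quotient is `exp s * (softplus s - exp s)`, which is negative because
`log (1 + x) < x` for `x > 0`.
So `G'` is strictly decreasing and `G` is strictly concave.
-/

open Real

noncomputable def softplus (s : ℝ) : ℝ := log (1 + exp s)

lemma one_lt_one_add_exp (s : ℝ) : 1 < 1 + exp s := lt_add_of_pos_right 1 (exp_pos s)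

lemma softplus_pos (s : ℝ) : 0 < softplus s := log_pos (one_lt_one_add_exp s)

lemma softplus_lt_exp (s : ℝ) : softplus s < exp s := by
  have := log_lt_sub_one_of_pos (by positivity) (one_lt_one_add_exp s).ne'
  unfold softplus
  linarith

lemma hasDerivAt_one_add_exp (s : ℝ) : HasDerivAt (fun s => 1 + exp s) (exp s) s := by
  simpa using (hasDerivAt_exp s).const_add 1

lemma hasDerivAt_softplus (s : ℝ) : HasDerivAt softplus (exp s / (1 + exp s)) s :=
  (hasDerivAt_one_add_exp s).log (by positivity)

lemma hasDerivAt_log_softplus (s : ℝ) :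
    HasDerivAt (fun s => log (softplus s)) (exp s / ((1 + exp s) * softplus s)) s := by
  refine ((hasDerivAt_softplus s).log (softplus_pos s).ne').congr_deriv ?_
  field_simp

lemma strictAnti_exp_div_one_add_exp_mul_softplus :
    StrictAnti fun s => exp s / ((1 + exp s) * softplus s) := by
  have hden (s : ℝ) : HasDerivAt (fun s => (1 + exp s) * softplus s)
      (exp s * softplus s + exp s) s := by
    refine ((hasDerivAt_one_add_exp s).mul (hasDerivAt_softplus s)).congr_deriv ?_
    rw [mul_div_cancel₀ _ (by positivity)]
  refine strictAnti_of_hasDerivAt_neg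
    (fun s => (hasDerivAt_exp s).div (hden s) (by positivity [softplus_pos s])) fun s => ?_
  have hnum : exp s * ((1 + exp s) * softplus s) - exp s * (exp s * softplus s + exp s)
      = exp s * (softplus s - exp s) := by ring
  rw [hnum]
  exact div_neg_of_neg_of_pos
    (mul_neg_of_pos_of_neg (exp_pos s) (sub_neg.mpr (softplus_lt_exp s)))
    (pow_pos (mul_pos (by positivity) (softplus_pos s)) 2)

theorem stmt_19 :
    StrictConcaveOn ℝ Set.univ (fun s : ℝ => Real.log (Real.log (1 + Real.exp s))) := by
  show StrictConcaveOn ℝ Set.univ fun s => log (softplus s)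
  have hG (s : ℝ) := hasDerivAt_log_softplus s
  refine StrictAnti.strictConcaveOn_univ_of_deriv
    (continuous_iff_continuousAt.mpr fun s => (hG s).continuousAt) ?_
  rw [show deriv (fun s => log (softplus s)) = _ from funext fun s => (hG s).deriv]
  exact strictAnti_exp_div_one_add_exp_mul_softplus
end
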